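/- If C is a PA with a reset letter #, and v is a weakly synchronizing infinite word for C such that every state other than q_f always shares its mass equally with a twin (so that at every time n, C^v_n(q) = C^v_n(q̂) for all q ≠ q_f along #-free-since-reset segments), then for every ε < 1/2 there exists a finite word w over Σ \ {#} with C^w_{|w|}(q_f) > 1 − ε when started from the initial distribution of C. -/

import Mathlib

/-!
After the last occurrence of the reset letter, the outcome of `C` on `v` is the run of `C` from
its initial distribution on a `#`-free word. Weak synchronization makes some outcome have a state
of mass above `1 - ε > 1/2`. That state cannot be a twin, since a twin pair shares its mass
equally and so each twin carries at most `1/2`; hence it is `q_f`.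
-/

open Filter Finset

/-- A probability distribution on a finite type. -/
def IsDist {Q : Type*} [Fintype Q] (d : Q → ℝ) : Prop :=
  (∀ q, 0 ≤ d q) ∧ ∑ q, d q = 1

/-- The norm of a distribution: its maximal value. -/
noncomputable def dnorm {Q : Type*} [Fintype Q] [Nonempty Q] (d : Q → ℝ) : ℝ :=
  Finset.univ.sup' Finset.univ_nonempty d

/-- A probabilistic automaton over states `Q` and alphabet `A`. -/
structure PA (Q : Type*) (A : Type*) [Fintype Q] where
  init : Q → ℝ
  init_dist : IsDist init
  trans : Q → A → Q → ℝ
  trans_dist : ∀ q σ, IsDist (trans q σ)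

variable {Q A : Type*} [Fintype Q]

/-- One transition step applied to a distribution. -/
def PAstep (M : PA Q A) (d : Q → ℝ) (σ : A) : Q → ℝ :=
  fun q => ∑ q', d q' * M.trans q' σ q

/-- Computation of a PA on a finite word, starting from distribution `μ`. -/
def PArun (M : PA Q A) (μ : Q → ℝ) (w : List A) : Q → ℝ :=
  w.foldl (PAstep M) μ

/-- Outcome of a PA on an infinite word, started from `μ`. -/
def PAoutcomeFrom (M : PA Q A) (μ : Q → ℝ) (w : ℕ → A) : ℕ → Q → ℝ
  | 0 => μ
  | n + 1 => PAstep M (PAoutcomeFrom M μ w n) (w n)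

/-- Outcome of a PA on an infinite word from the initial distribution. -/
def PAoutcome (M : PA Q A) (w : ℕ → A) : ℕ → Q → ℝ :=
  PAoutcomeFrom M M.init w

lemma IsDist.add_le_one {d : Q → ℝ} (hd : IsDist d) {x y : Q} (hxy : x ≠ y) :
    d x + d y ≤ 1 := by
  classical
  calc d x + d y = ∑ q ∈ {x, y}, d q := (sum_pair hxy).symm
    _ ≤ ∑ q, d q := sum_le_sum_of_subset_of_nonneg (subset_univ _) fun q _ _ => hd.1 q
    _ = 1 := hd.2

lemma le_dnorm [Nonempty Q] (d : Q → ℝ) (q : Q) : d q ≤ dnorm d :=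
  le_sup' d (mem_univ q)

lemma exists_eq_dnorm [Nonempty Q] (d : Q → ℝ) : ∃ q, d q = dnorm d :=
  let ⟨q, _, hq⟩ := exists_mem_eq_sup' univ_nonempty d
  ⟨q, hq.symm⟩

lemma IsDist.dnorm_nonneg [Nonempty Q] {d : Q → ℝ} (hd : IsDist d) : 0 ≤ dnorm d :=
  (hd.1 (Classical.arbitrary Q)).trans (le_dnorm d _)

lemma isDist_PAstep (M : PA Q A) {d : Q → ℝ} (hd : IsDist d) (σ : A) :
    IsDist (PAstep M d σ) := by
  refine ⟨fun q => sum_nonneg fun q' _ => mul_nonneg (hd.1 q') ((M.trans_dist q' σ).1 q), ?_⟩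
  calc ∑ q, PAstep M d σ q = ∑ q', d q' * ∑ q, M.trans q' σ q := by
        simp only [PAstep, mul_sum]; exact sum_comm
    _ = 1 := by simp only [(M.trans_dist _ σ).2, mul_one, hd.2]

lemma isDist_PArun (M : PA Q A) {μ : Q → ℝ} (hμ : IsDist μ) (w : List A) :
    IsDist (PArun M μ w) := by
  induction w generalizing μ with
  | nil => exact hμ
  | cons a w ih => exact ih (isDist_PAstep M hμ a)

lemma isDist_PAoutcome (M : PA Q A) (v : ℕ → A) (n : ℕ) : IsDist (PAoutcome M v n) := by
  induction n with
  | zero => exact M.init_dist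
  | succ n ih => exact isDist_PAstep M ih (v n)

lemma PArun_append_singleton (M : PA Q A) (μ : Q → ℝ) (u : List A) (σ : A) :
    PArun M μ (u ++ [σ]) = PAstep M (PArun M μ u) σ := by
  simp [PArun, List.foldl_append]

lemma PAstep_eq_of_trans_eq (M : PA Q A) {d : Q → ℝ} (hd : IsDist d) {σ : A} {ν : Q → ℝ}
    (hσ : ∀ q, M.trans q σ = ν) : PAstep M d σ = ν := by
  funext q
  simp only [PAstep, hσ, ← sum_mul, hd.2, one_mul]

lemma exists_PAoutcome_eq_PArun_of_reset (M : PA Q A) {σ : A} (hσ : ∀ q, M.trans q σ = M.init)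
    (v : ℕ → A) (n : ℕ) : ∃ u : List A, σ ∉ u ∧ PAoutcome M v n = PArun M M.init u := by
  induction n with
  | zero => exact ⟨[], List.not_mem_nil, rfl⟩
  | succ n ih =>
    obtain ⟨u, hu, hrun⟩ := ih
    by_cases hreset : v n = σ
    · refine ⟨[], List.not_mem_nil, ?_⟩
      change PAstep M (PAoutcome M v n) (v n) = M.init
      rw [hreset]
      exact PAstep_eq_of_trans_eq M (isDist_PAoutcome M v n) hσ
    · refine ⟨u ++ [v n], ?_, ?_⟩
      · simp only [List.mem_append, List.mem_singleton, not_or]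
        exact ⟨hu, Ne.symm hreset⟩
      · change PAstep M (PAoutcome M v n) (v n) = _
        rw [hrun, PArun_append_singleton]

lemma exists_lt_dnorm_PAoutcome [Nonempty Q] (M : PA Q A) (v : ℕ → A) {b : ℝ}
    (hb : b < limsup (fun n => dnorm (PAoutcome M v n)) atTop) :
    ∃ n, b < dnorm (PAoutcome M v n) :=
  (frequently_lt_of_lt_limsup
    (isBoundedUnder_of_eventually_ge
      (Eventually.of_forall fun n => (isDist_PAoutcome M v n).dnorm_nonneg)).isCoboundedUnder_le
    hb).exists

/-- If `C` has a reset letter `#`, its non-`q_f` states come in twin pairs that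
    always share their mass equally along `#`-free words, and `v` is weakly
    synchronizing for `C`, then for every `0 < ε < 1/2` there is a `#`-free
    finite word `w` with `C^w_{|w|}(q_f) > 1 - ε` from the initial
    distribution. -/
theorem stmt_13 {Q₀ A : Type*} [Fintype Q₀]
    (C : PA (Option (Q₀ × Bool)) A) (hash : A)
    (hreset : ∀ q, C.trans q hash = C.init)
    (htwin : ∀ u : List A, hash ∉ u → ∀ (q : Q₀) (b : Bool),
      PArun C C.init u (some (q, b)) = PArun C C.init u (some (q, !b)))
    (v : ℕ → A)
    (hv : Filter.limsup (fun n => dnorm (PAoutcome C v n)) Filter.atTop = 1) :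
    ∀ ε : ℝ, 0 < ε → ε < 1 / 2 →
      ∃ w : List A, hash ∉ w ∧ PArun C C.init w none > 1 - ε := by
  intro ε hε hε2
  obtain ⟨n, hn⟩ := exists_lt_dnorm_PAoutcome C v (b := 1 - ε) (by rw [hv]; linarith)
  obtain ⟨u, hu, hrun⟩ := exists_PAoutcome_eq_PArun_of_reset C hreset v n
  obtain ⟨q, hq⟩ := exists_eq_dnorm (PArun C C.init u)
  rw [hrun, ← hq] at hn
  match q with
  | none => exact ⟨u, hu, hn⟩
  | some (q₀, b) =>
    have hpair := (isDist_PArun C C.init_dist u).add_le_one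
      (x := some (q₀, b)) (y := some (q₀, !b)) (by simp)
    rw [← htwin u hu q₀ b] at hpair
    linarith
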